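/- Norm equivalence for the total-flux combined norm: assume c ≥ c₀ > 0, c - div b ≥ λ > 0, α‖φ‖² ≤ (Aφ,φ). For (x,y) ∈ H^1_0 × H(div), with N² := ‖x‖²_c + ‖∇x‖²_A + ‖y + b x‖²_{A^{-1}} + ‖div y‖²_{(c-div b)^{-1}} and G² := ‖x‖²_c + ‖∇x‖²_A + ‖y‖²_{A^{-1}} + ‖div y‖²_{(c-div b)^{-1}}, one has (max{2, 1 + 2‖b‖²_∞/(α c₀)})^{-1} N² ≤ G² ≤ 2(1 + ‖b‖²_∞/(α c₀)) N². -/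

import Mathlib

open MeasureTheory Complex Filter Finset

noncomputable section

namespace RCD

variable {d : ℕ}

/-- The ambient Euclidean space `ℝ^d`. -/
abbrev E (d : ℕ) := EuclideanSpace ℝ (Fin d)

/-- Componentwise gradient of a scalar function. -/
def grad (φ : E d → ℂ) (x : E d) (j : Fin d) : ℂ :=
  fderiv ℝ φ x (EuclideanSpace.single j 1)

/-- A smooth test function compactly supported inside `Ω`. -/
def IsTest (Ω : Set (E d)) (φ : E d → ℂ) : Prop :=
  ContDiff ℝ (⊤ : ℕ∞) φ ∧ HasCompactSupport φ ∧ tsupport φ ⊆ Ω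

/-- Complex `L²` inner product (conjugate-linear in the first argument). -/
def ip (μ : Measure (E d)) (f g : E d → ℂ) : ℂ :=
  ∫ x, (starRingEnd ℂ) (f x) * g x ∂μ

/-- Complex `L²` inner product of vector fields. -/
def ipV (μ : Measure (E d)) (f g : E d → Fin d → ℂ) : ℂ :=
  ∫ x, ∑ j, (starRingEnd ℂ) (f x j) * g x j ∂μ

/-- Squared `L²` norm with real weight `γ`. -/
def nsq (μ : Measure (E d)) (γ : E d → ℝ) (f : E d → ℂ) : ℝ :=
  ∫ x, γ x * ‖f x‖ ^ 2 ∂μ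

/-- Squared `L²` norm of a vector field with real weight `γ`. -/
def nsqV (μ : Measure (E d)) (γ : E d → ℝ) (f : E d → Fin d → ℂ) : ℝ :=
  ∫ x, γ x * ∑ j, ‖f x j‖ ^ 2 ∂μ

/-- Squared `L²` norm of a vector field weighted by a matrix field `M`. -/
def nsqM (μ : Measure (E d)) (M : E d → Matrix (Fin d) (Fin d) ℝ)
    (f : E d → Fin d → ℂ) : ℝ :=
  ∫ x, ∑ i, ∑ j, M x i j * ((starRingEnd ℂ) (f x i) * f x j).re ∂μ

/-- Product of a real matrix with a complex vector. -/
def mul (M : Matrix (Fin d) (Fin d) ℝ) (v : Fin d → ℂ) (i : Fin d) : ℂ :=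
  ∑ j, (M i j : ℂ) * v j

/-- A vector field is componentwise `L²`. -/
def MemL2V (μ : Measure (E d)) (f : E d → Fin d → ℂ) : Prop :=
  ∀ j, MemLp (fun x => f x j) 2 μ

/-- Membership `v ∈ H¹₀(Ω)` with gradient `gv`: `v` is an `H¹`-limit of smooth
functions compactly supported in `Ω`. -/
def MemH10 (Ω : Set (E d)) (μ : Measure (E d)) (v : E d → ℂ)
    (gv : E d → Fin d → ℂ) : Prop :=
  MemLp v 2 μ ∧ MemL2V μ gv ∧
  ∃ φ : ℕ → E d → ℂ, (∀ n, IsTest Ω (φ n)) ∧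
    Tendsto (fun n => nsq μ (fun _ => 1) (fun x => φ n x - v x) +
      nsqV μ (fun _ => 1) (fun x j => grad (φ n) x j - gv x j)) atTop (nhds 0)

/-- Membership `p ∈ H(div,Ω)` with divergence `dp` (distributional divergence). -/
def MemHdiv (Ω : Set (E d)) (μ : Measure (E d)) (p : E d → Fin d → ℂ)
    (dp : E d → ℂ) : Prop :=
  MemL2V μ p ∧ MemLp dp 2 μ ∧
  ∀ φ : E d → ℂ, IsTest Ω φ →
    ∫ x, ∑ j, grad φ x j * p x j ∂μ = - ∫ x, φ x * dp x ∂μ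

/-- `db` is the distributional divergence of the real vector field `b` on `Ω`. -/
def IsDiv (Ω : Set (E d)) (μ : Measure (E d)) (b : E d → Fin d → ℝ)
    (db : E d → ℝ) : Prop :=
  ∀ φ : E d → ℂ, IsTest Ω φ →
    ∫ x, ∑ j, grad φ x j * (b x j : ℂ) ∂μ = - ∫ x, φ x * (db x : ℂ) ∂μ

/-- The real vector field `b` is componentwise `L^∞`. -/
def MemLinfV (μ : Measure (E d)) (b : E d → Fin d → ℝ) : Prop :=
  ∀ j, MemLp (fun x => b x j) ⊤ μ

/-- The diffusion matrix `A` is self-adjoint, `L^∞`, with lower spectral bound `α > 0`. -/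
def IsDiffusion (μ : Measure (E d)) (A : E d → Matrix (Fin d) (Fin d) ℝ)
    (α : ℝ) : Prop :=
  (∀ x, (A x).IsSymm) ∧ (∀ i j, MemLp (fun x => A x i j) ⊤ μ) ∧ 0 < α ∧
  ∀ x (v : Fin d → ℂ),
    α * ∑ j, ‖v j‖ ^ 2 ≤ ∑ i, ∑ j, A x i j * ((starRingEnd ℂ) (v i) * v j).re

/-- The convective derivative `b·∇u`. -/
def bdot (b : E d → Fin d → ℝ) (gu : E d → Fin d → ℂ) (x : E d) : ℂ :=
  ∑ j, (b x j : ℂ) * gu x j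

/-- The Friedrichs inequality on `Ω` with constant `CF`:
`‖w‖ ≤ CF ‖∇w‖` for all `w ∈ H¹₀(Ω)` (stated for squared norms). -/
def Friedrichs (Ω : Set (E d)) (μ : Measure (E d)) (CF : ℝ) : Prop :=
  ∀ w gw, MemH10 Ω μ w gw →
    nsq μ (fun _ => 1) w ≤ CF ^ 2 * nsqV μ (fun _ => 1) gw

/-- `∑_j ‖b_j‖²_{L^∞}`, the squared `L^∞` norm of the vector field `b`. -/
def bInfSq (μ : Measure (E d)) (b : E d → Fin d → ℝ) : ℝ :=
  ∑ j, ((eLpNorm (fun x => b x j) ⊤ μ).toReal) ^ 2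

end RCD

open RCD

namespace B2Aux

open MeasureTheory Complex Filter Finset Matrix

variable {d : ℕ} {X : Type*} [MeasurableSpace X] {μ : Measure X}

/-- Real quadratic form of a matrix. -/
def qR (M : Matrix (Fin d) (Fin d) ℝ) (v : Fin d → ℝ) : ℝ := ∑ i, ∑ j, M i j * v i * v j

/-- Hermitian quadratic form of a real matrix on complex vectors. -/
def qC (M : Matrix (Fin d) (Fin d) ℝ) (v : Fin d → ℂ) : ℝ :=
  ∑ i, ∑ j, M i j * ((starRingEnd ℂ) (v i) * v j).re

lemma qR_eq_dot (M : Matrix (Fin d) (Fin d) ℝ) (v : Fin d → ℝ) :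
    qR M v = v ⬝ᵥ M.mulVec v := by
  simp [qR, dotProduct, Matrix.mulVec, Finset.mul_sum]
  exact Finset.sum_congr rfl fun i _ => Finset.sum_congr rfl fun j _ => by ring

lemma qR_inv (M : Matrix (Fin d) (Fin d) ℝ) {α : ℝ} (hα : 0 < α)
    (hco : ∀ v : Fin d → ℝ, α * ∑ i, v i ^ 2 ≤ qR M v) (u : Fin d → ℝ) :
    0 ≤ qR M⁻¹ u ∧ qR M⁻¹ u ≤ α⁻¹ * ∑ i, u i ^ 2 := by
  have hdet : IsUnit M.det := by
    rw [isUnit_iff_ne_zero]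
    intro h0
    obtain ⟨v, hv, hMv⟩ := (Matrix.exists_mulVec_eq_zero_iff).2 h0
    have h1 : qR M v = 0 := by rw [qR_eq_dot, hMv]; simp
    have h2 := hco v
    rw [h1] at h2
    have h3 : 0 < ∑ i, v i ^ 2 := by
      have hne : ∃ i, v i ≠ 0 := by
        by_contra hc; push_neg at hc; exact hv (funext hc)
      obtain ⟨i, hi⟩ := hne
      exact Finset.sum_pos' (fun j _ => sq_nonneg _) ⟨i, Finset.mem_univ i, by positivity⟩
    nlinarith
  set v : Fin d → ℝ := M⁻¹.mulVec u with hv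
  have hMv : M.mulVec v = u := by
    rw [hv, Matrix.mulVec_mulVec, Matrix.mul_nonsing_inv _ hdet, Matrix.one_mulVec]
  have hkey : qR M⁻¹ u = qR M v := by
    rw [qR_eq_dot, qR_eq_dot M v, ← hv, ← hMv, dotProduct_comm, hMv]
  have hco' := hco v
  have hsv : 0 ≤ ∑ i, v i ^ 2 := Finset.sum_nonneg fun i _ => sq_nonneg _
  have hsu : 0 ≤ ∑ i, u i ^ 2 := Finset.sum_nonneg fun i _ => sq_nonneg _
  have hvu : qR M v = ∑ i, v i * u i := by
    rw [qR_eq_dot, hMv]; simp [dotProduct]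
  constructor
  · rw [hkey]; nlinarith
  · have hcs : (∑ i, v i * u i) ^ 2 ≤ (∑ i, v i ^ 2) * ∑ i, u i ^ 2 :=
      Finset.sum_mul_sq_le_sq_mul_sq _ _ _
    rw [hkey, hvu]
    rw [hvu] at hco'
    set t := ∑ i, v i * u i
    have h1 : 0 ≤ t := le_trans (by positivity) hco'
    have h2 : α * t ≤ ∑ i, u i ^ 2 := by
      nlinarith [mul_le_mul_of_nonneg_right hco' hsu, mul_le_mul_of_nonneg_left hcs hα.le]
    calc t = α⁻¹ * (α * t) := by field_simp
    _ ≤ α⁻¹ * ∑ i, u i ^ 2 := mul_le_mul_of_nonneg_left h2 (by positivity)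

lemma qC_eq (M : Matrix (Fin d) (Fin d) ℝ) (v : Fin d → ℂ) :
    qC M v = qR M (fun i => (v i).re) + qR M (fun i => (v i).im) := by
  unfold qC qR
  rw [← Finset.sum_add_distrib]
  refine Finset.sum_congr rfl fun i _ => ?_
  rw [← Finset.sum_add_distrib]
  refine Finset.sum_congr rfl fun j _ => ?_
  simp only [Complex.mul_re, Complex.conj_re, Complex.conj_im]
  ring

lemma qR_par (M : Matrix (Fin d) (Fin d) ℝ) (p q : Fin d → ℝ) :
    qR M (fun i => p i + q i) + qR M (fun i => p i - q i) = 2 * qR M p + 2 * qR M q := by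
  simp only [qR, Finset.mul_sum, ← Finset.sum_add_distrib]
  exact Finset.sum_congr rfl fun i _ => Finset.sum_congr rfl fun j _ => by ring

lemma qC_par (M : Matrix (Fin d) (Fin d) ℝ) (v w : Fin d → ℂ) :
    qC M (fun j => v j + w j) + qC M (fun j => v j - w j) = 2 * qC M v + 2 * qC M w := by
  simp only [qC_eq, Complex.add_re, Complex.add_im, Complex.sub_re, Complex.sub_im]
  have h1 := qR_par M (fun i => (v i).re) (fun i => (w i).re)
  have h2 := qR_par M (fun i => (v i).im) (fun i => (w i).im)
  linarith

lemma normsq_decomp (z : ℂ) : ‖z‖ ^ 2 = z.re ^ 2 + z.im ^ 2 := by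
  rw [← Complex.normSq_eq_norm_sq, Complex.normSq_apply]; ring

lemma qC_real (M : Matrix (Fin d) (Fin d) ℝ) (v : Fin d → ℝ) :
    qC M (fun i => (v i : ℂ)) = qR M v := by
  unfold qC qR
  refine Finset.sum_congr rfl fun i _ => Finset.sum_congr rfl fun j _ => ?_
  simp [Complex.mul_re]; ring

lemma aem_det {M : X → Matrix (Fin d) (Fin d) ℝ}
    (h : ∀ i j, AEMeasurable (fun z => M z i j) μ) :
    AEMeasurable (fun z => (M z).det) μ := by
  simp_rw [Matrix.det_apply']
  exact Finset.aemeasurable_fun_sum _ fun σ _ =>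
    (Finset.aemeasurable_fun_prod _ fun i _ => h _ _).const_mul _

lemma aem_inv {M : X → Matrix (Fin d) (Fin d) ℝ}
    (h : ∀ i j, AEMeasurable (fun z => M z i j) μ) (i j : Fin d) :
    AEMeasurable (fun z => (M z)⁻¹ i j) μ := by
  have hrw : (fun z => (M z)⁻¹ i j)
      = fun z => ((M z).det)⁻¹ * ((M z).updateRow j (Pi.single i 1)).det := by
    funext z
    rw [Matrix.inv_def, Matrix.smul_apply, Ring.inverse_eq_inv', Matrix.adjugate_apply]
    rfl
  rw [hrw]
  refine ((aem_det h).inv).mul (aem_det fun a b => ?_)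
  by_cases hab : a = j
  · subst hab; simp only [Matrix.updateRow_apply, if_pos rfl]
    exact aemeasurable_const
  · simp only [Matrix.updateRow_apply, if_neg hab]
    exact h a b

lemma linf_ae_bound {f : X → ℝ} (hf : MemLp f ⊤ μ) :
    ∀ᵐ z ∂μ, |f z| ≤ (eLpNorm f ⊤ μ).toReal := by
  have h := ae_le_eLpNormEssSup (f := f) (μ := μ)
  have hlt : eLpNormEssSup f μ ≠ ⊤ := by
    rw [← eLpNorm_exponent_top]; exact hf.2.ne
  filter_upwards [h] with z hz
  have : ((‖f z‖₊ : ENNReal)).toReal ≤ (eLpNormEssSup f μ).toReal :=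
    ENNReal.toReal_mono hlt hz
  simpa [eLpNorm_exponent_top, Real.norm_eq_abs] using this

end B2Aux

/-- Theorem B.2 (norm equivalence for the total-flux combined norm): assume
`c ≥ c₀ > 0`, `c - div b ≥ λ > 0`, `α‖φ‖² ≤ (Aφ,φ)`. With
`N² = ‖x‖²_c + ‖∇x‖²_A + ‖y + b x‖²_{A⁻¹} + ‖div y‖²_{(c-div b)⁻¹}` and
`G² = ‖x‖²_c + ‖∇x‖²_A + ‖y‖²_{A⁻¹} + ‖div y‖²_{(c-div b)⁻¹}`:
`(max{2, 1+2‖b‖²_∞/(αc₀)})⁻¹ N² ≤ G² ≤ 2(1+‖b‖²_∞/(αc₀)) N²`. -/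
theorem statement18 (d : ℕ) (Ω : Set (E d)) (μ : Measure (E d))
    (hμ : μ = volume.restrict Ω)
    (A : E d → Matrix (Fin d) (Fin d) ℝ) (α : ℝ) (hA : IsDiffusion μ A α)
    (b : E d → Fin d → ℝ) (db : E d → ℝ)
    (hb : MemLinfV μ b) (hdb : MemLp db ⊤ μ) (hdiv : IsDiv Ω μ b db)
    (c : E d → ℝ) (hcL : MemLp c ⊤ μ)
    (c₀ : ℝ) (hc₀ : 0 < c₀) (hc : ∀ᵐ x ∂μ, c₀ ≤ c x)
    (lam : ℝ) (hlam : 0 < lam) (hcb : ∀ᵐ x ∂μ, lam ≤ c x - db x)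
    (x : E d → ℂ) (gx : E d → Fin d → ℂ) (hx : MemH10 Ω μ x gx)
    (y : E d → Fin d → ℂ) (dy : E d → ℂ) (hy : MemHdiv Ω μ y dy) :
    (max 2 (1 + 2 * bInfSq μ b / (α * c₀)))⁻¹ *
        (nsq μ c x + nsqM μ A gx
          + nsqM μ (fun z => (A z)⁻¹) (fun z j => y z j + (b z j : ℂ) * x z)
          + nsq μ (fun z => (c z - db z)⁻¹) dy)
      ≤ nsq μ c x + nsqM μ A gx + nsqM μ (fun z => (A z)⁻¹) y
          + nsq μ (fun z => (c z - db z)⁻¹) dy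
    ∧ nsq μ c x + nsqM μ A gx + nsqM μ (fun z => (A z)⁻¹) y
          + nsq μ (fun z => (c z - db z)⁻¹) dy
      ≤ 2 * (1 + bInfSq μ b / (α * c₀)) *
          (nsq μ c x + nsqM μ A gx
            + nsqM μ (fun z => (A z)⁻¹) (fun z j => y z j + (b z j : ℂ) * x z)
            + nsq μ (fun z => (c z - db z)⁻¹) dy) := by
  classical
  obtain ⟨hAsymm, hAL, hα, hAco⟩ := hA
  -- pointwise real coercivity
  have hcoR : ∀ z (v : Fin d → ℝ), α * ∑ i, v i ^ 2 ≤ B2Aux.qR (A z) v := by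
    intro z v
    have h := hAco z (fun i => (v i : ℂ))
    rw [show (∑ i, ∑ j, A z i j * ((starRingEnd ℂ) ((v i : ℂ)) * (v j : ℂ)).re)
        = B2Aux.qC (A z) (fun i => (v i : ℂ)) from rfl, B2Aux.qC_real] at h
    refine le_trans (le_of_eq ?_) h
    congr 1
    exact Finset.sum_congr rfl fun i _ => by
      rw [Complex.norm_real, Real.norm_eq_abs, _root_.sq_abs]
  have hQnn : ∀ z (v : Fin d → ℂ), 0 ≤ B2Aux.qC (A z)⁻¹ v := by
    intro z v
    rw [B2Aux.qC_eq]
    have h1 := (B2Aux.qR_inv (A z) hα (hcoR z) (fun i => (v i).re)).1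
    have h2 := (B2Aux.qR_inv (A z) hα (hcoR z) (fun i => (v i).im)).1
    linarith
  have hQle : ∀ z (v : Fin d → ℂ), B2Aux.qC (A z)⁻¹ v ≤ α⁻¹ * ∑ j, ‖v j‖ ^ 2 := by
    intro z v
    rw [B2Aux.qC_eq]
    have h1 := (B2Aux.qR_inv (A z) hα (hcoR z) (fun i => (v i).re)).2
    have h2 := (B2Aux.qR_inv (A z) hα (hcoR z) (fun i => (v i).im)).2
    have h3 : ∑ j, ‖v j‖ ^ 2 = (∑ i, (v i).re ^ 2) + ∑ i, (v i).im ^ 2 := by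
      rw [← Finset.sum_add_distrib]
      exact Finset.sum_congr rfl fun j _ => B2Aux.normsq_decomp _
    rw [h3, mul_add]
    linarith
  have hQadd : ∀ z (v w : Fin d → ℂ),
      B2Aux.qC (A z)⁻¹ (fun j => v j + w j)
        ≤ 2 * B2Aux.qC (A z)⁻¹ v + 2 * B2Aux.qC (A z)⁻¹ w := by
    intro z v w
    have h := B2Aux.qC_par (A z)⁻¹ v w
    have hnn := hQnn z (fun j => v j - w j)
    linarith
  -- constants
  set B := bInfSq μ b with hB
  have hBnn : 0 ≤ B := Finset.sum_nonneg fun j _ => sq_nonneg _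
  have hαc : 0 < α * c₀ := mul_pos hα hc₀
  set β := B / (α * c₀) with hβ
  have hβnn : 0 ≤ β := div_nonneg hBnn hαc.le
  -- a.e. bound for b·x
  have hbB : ∀ᵐ z ∂μ, ∑ j, ‖(b z j : ℂ) * x z‖ ^ 2 ≤ B * ‖x z‖ ^ 2 := by
    have h : ∀ᵐ z ∂μ, ∀ j : Fin d, |b z j| ≤ (eLpNorm (fun x => b x j) ⊤ μ).toReal :=
      (ae_all_iff).2 fun j => B2Aux.linf_ae_bound (hb j)
    filter_upwards [h] with z hz
    calc ∑ j, ‖(b z j : ℂ) * x z‖ ^ 2 = ∑ j, (b z j) ^ 2 * ‖x z‖ ^ 2 := by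
          refine Finset.sum_congr rfl fun j _ => ?_
          rw [norm_mul, mul_pow, Complex.norm_real, Real.norm_eq_abs, _root_.sq_abs]
    _ ≤ ∑ j, ((eLpNorm (fun x => b x j) ⊤ μ).toReal) ^ 2 * ‖x z‖ ^ 2 := by
          refine Finset.sum_le_sum fun j _ => mul_le_mul_of_nonneg_right ?_ (sq_nonneg _)
          have h1 := hz j
          calc (b z j) ^ 2 = |b z j| ^ 2 := (_root_.sq_abs _).symm
          _ ≤ ((eLpNorm (fun x => b x j) ⊤ μ).toReal) ^ 2 :=
            pow_le_pow_left₀ (abs_nonneg _) h1 2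
    _ = B * ‖x z‖ ^ 2 := by rw [hB]; unfold bInfSq; rw [← Finset.sum_mul]
  -- measurability
  have hAaem : ∀ i j, AEMeasurable (fun z => A z i j) μ := fun i j =>
    (hAL i j).aestronglyMeasurable.aemeasurable
  have hIaem : ∀ i j, AEMeasurable (fun z => (A z)⁻¹ i j) μ := B2Aux.aem_inv hAaem
  have hxaem : AEMeasurable x μ := hx.1.aestronglyMeasurable.aemeasurable
  have hyaem : ∀ j, AEMeasurable (fun z => y z j) μ := fun j =>
    (hy.1 j).aestronglyMeasurable.aemeasurable
  have hbaem : ∀ j, AEMeasurable (fun z => b z j) μ := fun j =>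
    (hb j).aestronglyMeasurable.aemeasurable
  have hQaem : ∀ (f : E d → Fin d → ℂ), (∀ j, AEMeasurable (fun z => f z j) μ) →
      AEMeasurable (fun z => B2Aux.qC (A z)⁻¹ (f z)) μ := by
    intro f hf
    unfold B2Aux.qC
    refine Finset.aemeasurable_fun_sum _ fun i _ => Finset.aemeasurable_fun_sum _ fun j _ => ?_
    exact (hIaem i j).mul (Complex.measurable_re.comp_aemeasurable
      ((continuous_star.measurable.comp_aemeasurable (hf i)).mul (hf j)))
  have hbxaem : ∀ j, AEMeasurable (fun z => (b z j : ℂ) * x z) μ := fun j =>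
    (Complex.measurable_ofReal.comp_aemeasurable (hbaem j)).mul hxaem
  -- integrability
  have hxsq : Integrable (fun z => ‖x z‖ ^ 2) μ := hx.1.norm.integrable_sq
  have hysq : Integrable (fun z => ∑ j, ‖y z j‖ ^ 2) μ :=
    integrable_finset_sum _ fun j _ => (hy.1 j).norm.integrable_sq
  have hcx : Integrable (fun z => c z * ‖x z‖ ^ 2) μ := by
    refine hxsq.bdd_mul (c := (eLpNorm c ⊤ μ).toReal) hcL.aestronglyMeasurable ?_
    filter_upwards [B2Aux.linf_ae_bound hcL] with z hz
    simpa [Real.norm_eq_abs] using hz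
  have hIQy : Integrable (fun z => B2Aux.qC (A z)⁻¹ (y z)) μ := by
    refine Integrable.mono' (hysq.const_mul α⁻¹)
      ((hQaem y hyaem).aestronglyMeasurable) (Eventually.of_forall fun z => ?_)
    rw [Real.norm_eq_abs, _root_.abs_of_nonneg (hQnn z _)]
    exact hQle z _
  have hIQw : Integrable
      (fun z => B2Aux.qC (A z)⁻¹ (fun j => y z j + (b z j : ℂ) * x z)) μ := by
    have hg : Integrable (fun z => α⁻¹ * (2 * (∑ j, ‖y z j‖ ^ 2) + 2 * B * ‖x z‖ ^ 2)) μ :=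
      ((hysq.const_mul 2).add (hxsq.const_mul (2 * B))).const_mul α⁻¹
    refine Integrable.mono' hg
      ((hQaem _ (fun j => (hyaem j).add (hbxaem j))).aestronglyMeasurable) ?_
    filter_upwards [hbB] with z hz
    rw [Real.norm_eq_abs, _root_.abs_of_nonneg (hQnn z _)]
    refine le_trans (hQle z _) (mul_le_mul_of_nonneg_left ?_ (by positivity))
    have hsum : ∑ j, ‖y z j + (b z j : ℂ) * x z‖ ^ 2
        ≤ 2 * (∑ j, ‖y z j‖ ^ 2) + 2 * ∑ j, ‖(b z j : ℂ) * x z‖ ^ 2 := by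
      rw [Finset.mul_sum, Finset.mul_sum, ← Finset.sum_add_distrib]
      refine Finset.sum_le_sum fun j _ => ?_
      nlinarith [sq_nonneg (‖y z j‖ - ‖(b z j : ℂ) * x z‖), norm_nonneg (y z j),
        norm_nonneg ((b z j : ℂ) * x z),
        pow_le_pow_left₀ (norm_nonneg _) (norm_add_le (y z j) ((b z j : ℂ) * x z)) 2]
    nlinarith
  -- a.e. comparison 1 : q(y+bx) ≤ 2 q(y) + 2 β (c |x|²)
  have hae1 : ∀ᵐ z ∂μ, B2Aux.qC (A z)⁻¹ (fun j => y z j + (b z j : ℂ) * x z)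
      ≤ 2 * B2Aux.qC (A z)⁻¹ (y z) + 2 * β * (c z * ‖x z‖ ^ 2) := by
    filter_upwards [hbB, hc] with z hz hcz
    have h1 := hQadd z (y z) (fun j => (b z j : ℂ) * x z)
    have h5 : B2Aux.qC (A z)⁻¹ (fun j => (b z j : ℂ) * x z) ≤ β * (c z * ‖x z‖ ^ 2) := by
      have h2 : B2Aux.qC (A z)⁻¹ (fun j => (b z j : ℂ) * x z) ≤ α⁻¹ * (B * ‖x z‖ ^ 2) :=
        le_trans (hQle z _) (mul_le_mul_of_nonneg_left hz (by positivity))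
      have h3 : α⁻¹ * (B * ‖x z‖ ^ 2) = β * (c₀ * ‖x z‖ ^ 2) := by
        rw [hβ]; field_simp
      have h4 : β * (c₀ * ‖x z‖ ^ 2) ≤ β * (c z * ‖x z‖ ^ 2) :=
        mul_le_mul_of_nonneg_left
          (mul_le_mul_of_nonneg_right hcz (sq_nonneg _)) hβnn
      linarith
    nlinarith [h1, h5]
  -- a.e. comparison 2 : q(y) ≤ 2 q(y+bx) + 2 β (c |x|²)
  have hae2 : ∀ᵐ z ∂μ, B2Aux.qC (A z)⁻¹ (y z)
      ≤ 2 * B2Aux.qC (A z)⁻¹ (fun j => y z j + (b z j : ℂ) * x z)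
        + 2 * β * (c z * ‖x z‖ ^ 2) := by
    filter_upwards [hbB, hc] with z hz hcz
    have h1 := hQadd z (fun j => y z j + (b z j : ℂ) * x z)
      (fun j => -((b z j : ℂ) * x z))
    simp only [add_neg_cancel_right] at h1
    have h5 : B2Aux.qC (A z)⁻¹ (fun j => -((b z j : ℂ) * x z))
        ≤ β * (c z * ‖x z‖ ^ 2) := by
      have h2 : B2Aux.qC (A z)⁻¹ (fun j => -((b z j : ℂ) * x z))
          ≤ α⁻¹ * (B * ‖x z‖ ^ 2) := by
        refine le_trans (hQle z _) (le_trans (le_of_eq ?_)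
          (mul_le_mul_of_nonneg_left hz (by positivity)))
        congr 1
        exact Finset.sum_congr rfl fun j _ => by rw [norm_neg]
      have h3 : α⁻¹ * (B * ‖x z‖ ^ 2) = β * (c₀ * ‖x z‖ ^ 2) := by
        rw [hβ]; field_simp
      have h4 : β * (c₀ * ‖x z‖ ^ 2) ≤ β * (c z * ‖x z‖ ^ 2) :=
        mul_le_mul_of_nonneg_left
          (mul_le_mul_of_nonneg_right hcz (sq_nonneg _)) hβnn
      linarith
    nlinarith [h1, h5]
  -- identify the nsqM integrals with qC integrals
  have hUeq : nsqM μ (fun z => (A z)⁻¹) y = ∫ z, B2Aux.qC (A z)⁻¹ (y z) ∂μ := rfl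
  have hWeq : nsqM μ (fun z => (A z)⁻¹) (fun z j => y z j + (b z j : ℂ) * x z)
      = ∫ z, B2Aux.qC (A z)⁻¹ (fun j => y z j + (b z j : ℂ) * x z) ∂μ := rfl
  have hSeq : nsq μ c x = ∫ z, c z * ‖x z‖ ^ 2 ∂μ := rfl
  -- integral inequalities
  have hWle : nsqM μ (fun z => (A z)⁻¹) (fun z j => y z j + (b z j : ℂ) * x z)
      ≤ 2 * nsqM μ (fun z => (A z)⁻¹) y + 2 * β * nsq μ c x := by
    rw [hUeq, hWeq, hSeq]
    have hi1 : Integrable (fun z => 2 * B2Aux.qC (A z)⁻¹ (y z)) μ := hIQy.const_mul 2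
    have hi2 : Integrable (fun z => 2 * β * (c z * ‖x z‖ ^ 2)) μ := hcx.const_mul (2 * β)
    have hgint : Integrable
        (fun z => 2 * B2Aux.qC (A z)⁻¹ (y z) + 2 * β * (c z * ‖x z‖ ^ 2)) μ := hi1.add hi2
    have h := integral_mono_of_nonneg (Eventually.of_forall fun z => hQnn z _) hgint hae1
    rwa [integral_add hi1 hi2, integral_const_mul, integral_const_mul] at h
  have hUle : nsqM μ (fun z => (A z)⁻¹) y
      ≤ 2 * nsqM μ (fun z => (A z)⁻¹) (fun z j => y z j + (b z j : ℂ) * x z)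
        + 2 * β * nsq μ c x := by
    rw [hUeq, hWeq, hSeq]
    have hi1 : Integrable
        (fun z => 2 * B2Aux.qC (A z)⁻¹ (fun j => y z j + (b z j : ℂ) * x z)) μ :=
      hIQw.const_mul 2
    have hi2 : Integrable (fun z => 2 * β * (c z * ‖x z‖ ^ 2)) μ := hcx.const_mul (2 * β)
    have hgint : Integrable
        (fun z => 2 * B2Aux.qC (A z)⁻¹ (fun j => y z j + (b z j : ℂ) * x z)
          + 2 * β * (c z * ‖x z‖ ^ 2)) μ := hi1.add hi2
    have h := integral_mono_of_nonneg (Eventually.of_forall fun z => hQnn z _) hgint hae2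
    rwa [integral_add hi1 hi2, integral_const_mul, integral_const_mul] at h
  -- nonnegativity
  have hSnn : 0 ≤ nsq μ c x := by
    refine integral_nonneg_of_ae ?_
    filter_upwards [hc] with z hz
    exact mul_nonneg (le_trans hc₀.le hz) (sq_nonneg _)
  have hTnn : 0 ≤ nsqM μ A gx :=
    integral_nonneg fun z => le_trans (by positivity) (hAco z (gx z))
  have hUnn : 0 ≤ nsqM μ (fun z => (A z)⁻¹) y := integral_nonneg fun z => hQnn z _
  have hWnn : 0 ≤ nsqM μ (fun z => (A z)⁻¹) (fun z j => y z j + (b z j : ℂ) * x z) :=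
    integral_nonneg fun z => hQnn z _
  have hVnn : 0 ≤ nsq μ (fun z => (c z - db z)⁻¹) dy := by
    refine integral_nonneg_of_ae ?_
    filter_upwards [hcb] with z hz
    exact mul_nonneg (inv_nonneg.2 (le_trans hlam.le hz)) (sq_nonneg _)
  -- final arithmetic
  set S := nsq μ c x
  set T := nsqM μ A gx
  set U := nsqM μ (fun z => (A z)⁻¹) y
  set W := nsqM μ (fun z => (A z)⁻¹) (fun z j => y z j + (b z j : ℂ) * x z)
  set V := nsq μ (fun z => (c z - db z)⁻¹) dy
  have hKeq : 2 * B / (α * c₀) = 2 * β := by rw [hβ]; ring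
  rw [hKeq]
  have hKpos : (0 : ℝ) < max 2 (1 + 2 * β) :=
    lt_of_lt_of_le two_pos (le_max_left _ _)
  have hK2 : (2 : ℝ) ≤ max 2 (1 + 2 * β) := le_max_left _ _
  have hKb : 1 + 2 * β ≤ max 2 (1 + 2 * β) := le_max_right _ _
  constructor
  · rw [inv_mul_le_iff₀ hKpos]
    nlinarith [mul_nonneg (sub_nonneg.2 hKb) hSnn, mul_nonneg (sub_nonneg.2 hK2) hTnn,
      mul_nonneg (sub_nonneg.2 hK2) hUnn, mul_nonneg (sub_nonneg.2 hK2) hVnn]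
  · nlinarith [mul_nonneg hβnn hTnn, mul_nonneg hβnn hWnn, mul_nonneg hβnn hVnn,
      mul_nonneg hβnn hSnn]
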